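/- Let n ≥ 1, let ω belong to the class L¹_G(ℝ₊) for n with Mω(j) > 0 for j = 1,…,n, and suppose p(a) = C_n[ω]·Δ_n(a)·det[((−x·d/dx)^{b−1}ω)(a_c)]_{b,c=1,…,n} is a probability density on (0,∞)^n, where C_n[ω] is the normalization constant. Then C_n[ω] = ∏_{j=1}^n 1/(j!·Mω(j)), and for every s ∈ ℝ^n with pairwise distinct entries such that s_c − (n−1)/2 ∈ [1,n] for all c: (∏_{j=0}^{n−1} j!) · ∫_{(0,∞)^n} p(a) · det[ a_b^{s_c − (n+1)/2} ]_{b,c=1,…,n} / ( Δ_n(s) · Δ_n(a) ) da = ∏_{j=1}^n Mω( s_j − (n−1)/2 )/Mω(j), where Mω(s) = ∫₀^∞ ω(x)·x^{s−1} dx is the Mellin transform. -/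

import Mathlib

open MeasureTheory Finset

/-- The Vandermonde determinant `Δ_m(a) = ∏_{1 ≤ b < c ≤ m} (a_c − a_b)`. -/
noncomputable def vdm {m : ℕ} (a : Fin m → ℝ) : ℝ :=
  ∏ p ∈ Finset.univ.filter (fun p : Fin m × Fin m => p.1 < p.2), (a p.2 - a p.1)

/-- The operator `f ↦ (x ↦ x·f′(x))`. -/
noncomputable def xdop (f : ℝ → ℝ) : ℝ → ℝ := fun x => x * deriv f x

/-- The Mellin transform `Mω(s) = ∫₀^∞ ω(x)·x^{s−1} dx`. -/
noncomputable def Mell (w : ℝ → ℝ) (s : ℝ) : ℝ := ∫ x in Set.Ioi (0:ℝ), w x * x ^ (s - 1)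

/-!
Integrating by parts in the variable `t = log x` gives `M[(x d/dx)^j ω](κ) = (-κ)^j M[ω](κ)`.
By Andreief's identity,
`∫ det[a_c^(κ_b - 1)] det[((-x d/dx)^b ω)(a_c)] da = n! det[κ_b^c M[ω](κ_b)]`,
which is `n! ∏_b M[ω](κ_b) Δ_n(κ)`.
For `κ_b = b + 1` the first determinant is `Δ_n(a)`, so the density integrates to
`C n! ∏_j M[ω](j) ∏_{j<n} j!`, which must be `1`; for `κ_c = s_c - (n-1)/2` the first determinant
is the one in the spherical transform, and `Δ_n(κ) = Δ_n(s)`.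
-/

open Set Matrix Equiv Nat

theorem vdm_eq_det_vandermonde {m : ℕ} (a : Fin m → ℝ) : vdm a = (vandermonde a).det := by
  rw [det_vandermonde, vdm, Finset.prod_sigma']
  refine Finset.prod_nbij' (fun p => ⟨p.1, p.2⟩) (fun p => (p.1, p.2)) ?_ ?_ ?_ ?_ ?_ <;>
    simp

theorem vdm_ne_zero_iff {m : ℕ} {a : Fin m → ℝ} : vdm a ≠ 0 ↔ Function.Injective a := by
  rw [vdm_eq_det_vandermonde, det_vandermonde_ne_zero_iff]

theorem vdm_sub_const {m : ℕ} (a : Fin m → ℝ) (t : ℝ) : vdm (fun i => a i - t) = vdm a :=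
  Finset.prod_congr rfl fun _ _ => by ring

theorem vdm_natCast_add_one (m : ℕ) :
    vdm (fun i : Fin m => (i : ℝ) + 1) = ∏ j ∈ range m, (j ! : ℝ) := by
  rw [← vdm_sub_const _ 1]
  simp only [add_sub_cancel_right]
  cases m with
  | zero => simp [vdm]
  | succ m =>
    rw [vdm_eq_det_vandermonde, det_vandermonde_id_eq_superFactorial,
      ← Nat.prod_range_succ_factorial]
    push_cast
    rfl

theorem det_eq_zero_of_vdm_eq_zero {m : ℕ} {a : Fin m → ℝ} (ha : vdm a = 0)
    (g : Fin m → ℝ → ℝ) : (of fun b c => g b (a c)).det = 0 := by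
  obtain ⟨i, j, haij, hij⟩ := Function.not_injective_iff.1 (vdm_ne_zero_iff.not_right.1 ha)
  exact det_zero_of_column_eq hij fun b => by simp [haij]

theorem prod_Icc_one_factorial_mul (F : ℕ → ℝ) (n : ℕ) :
    ∏ j ∈ Icc 1 n, ((j ! : ℝ) * F j)
      = n ! * (∏ j ∈ range n, F (j + 1)) * ∏ j ∈ range n, (j ! : ℝ) := by
  induction n with
  | zero => simp
  | succ n ih =>
    rw [prod_Icc_succ_top (by omega), ih, prod_range_succ, prod_range_succ, factorial_succ]
    push_cast
    ring

/-- Andreief's identity. -/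
theorem integral_det_mul_det_eq_factorial_mul_det {𝕜 ι α : Type*} [RCLike 𝕜] [Fintype ι]
    [DecidableEq ι] [MeasurableSpace α] {μ : Measure α} [SigmaFinite μ] (f g : ι → α → 𝕜)
    (hfg : ∀ b c, Integrable (fun x => f b x * g c x) μ) :
    ∫ a, (of fun b c => f b (a c)).det * (of fun b c => g b (a c)).det ∂(Measure.pi fun _ => μ)
      = ((Fintype.card ι)! : 𝕜) * (of fun b c => ∫ x, f b x * g c x ∂μ).det := by
  set M : ι → ι → 𝕜 := fun b c => ∫ x, f b x * g c x ∂μ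
  have hexpand : ∀ a : ι → α, (of fun b c => f b (a c)).det * (of fun b c => g b (a c)).det
      = ∑ σ : Perm ι, ∑ τ : Perm ι, ((Perm.sign σ * Perm.sign τ : ℤˣ) : 𝕜) *
          ∏ c, f (σ c) (a c) * g (τ c) (a c) := by
    intro a
    simp only [det_apply', Finset.sum_mul_sum, of_apply, Finset.prod_mul_distrib]
    refine Finset.sum_congr rfl fun σ _ => Finset.sum_congr rfl fun τ _ => ?_
    push_cast
    ring
  have hint : ∀ σ τ : Perm ι, Integrable (fun a : ι → α => ∏ c, f (σ c) (a c) * g (τ c) (a c))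
      (Measure.pi fun _ => μ) := fun σ τ => Integrable.fintype_prod fun c => hfg _ _
  -- the sum over `τ` is `sign σ * det (M.submatrix σ id) = sign σ * sign σ * det M`
  have hrow : ∀ σ : Perm ι,
      ∑ τ : Perm ι, ((Perm.sign σ * Perm.sign τ : ℤˣ) : 𝕜) * ∏ c, M (σ c) (τ c) = (of M).det := by
    intro σ
    have := det_permute σ (of M)
    rw [← det_transpose, det_apply'] at this
    simp only [transpose_apply, submatrix_apply, id, of_apply] at this
    simp only [Units.val_mul, Int.cast_mul, mul_assoc]
    rw [← Finset.mul_sum, this, ← mul_assoc, ← Int.cast_mul, ← Units.val_mul, Int.units_mul_self,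
      Units.val_one, Int.cast_one, one_mul]
  have hσ : ∀ σ : Perm ι, ∫ a, ∑ τ : Perm ι, ((Perm.sign σ * Perm.sign τ : ℤˣ) : 𝕜) *
      ∏ c, f (σ c) (a c) * g (τ c) (a c) ∂(Measure.pi fun _ => μ) = (of M).det := by
    intro σ
    rw [integral_finsetSum _ fun τ _ => (hint σ τ).const_mul _, ← hrow σ]
    refine Finset.sum_congr rfl fun τ _ => ?_
    rw [integral_const_mul,
      integral_fintype_prod_eq_prod (fun c x => f (σ c) x * g (τ c) x)]
  simp_rw [hexpand]
  rw [integral_finsetSum _ fun σ _ => integrable_finsetSum _ fun τ _ => (hint σ τ).const_mul _,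
    Finset.sum_congr rfl fun σ _ => hσ σ]
  simp [Fintype.card_perm]

theorem integrableOn_Ioi_zero_iff_integrable_exp_mul_comp_exp {F : ℝ → ℝ} :
    IntegrableOn F (Ioi 0) ↔ Integrable fun t => Real.exp t * F (Real.exp t) := by
  rw [← Real.range_exp, ← image_univ, integrableOn_image_iff_integrableOn_abs_deriv_smul
    MeasurableSet.univ (fun t _ => (Real.hasDerivAt_exp t).hasDerivWithinAt)
    Real.exp_injective.injOn, integrableOn_univ]
  simp only [abs_of_pos (Real.exp_pos _), smul_eq_mul]

theorem integral_Ioi_zero_eq_integral_exp_mul_comp_exp (F : ℝ → ℝ) :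
    ∫ x in Ioi 0, F x = ∫ t, Real.exp t * F (Real.exp t) := by
  rw [← Real.range_exp, ← image_univ, integral_image_eq_integral_abs_deriv_smul
    MeasurableSet.univ (fun t _ => (Real.hasDerivAt_exp t).hasDerivWithinAt)
    Real.exp_injective.injOn, setIntegral_univ]
  simp only [abs_of_pos (Real.exp_pos _), smul_eq_mul]

theorem mell_xdop {f : ℝ → ℝ} {κ : ℝ} (hd : ∀ x, 0 < x → DifferentiableAt ℝ f x)
    (hf : IntegrableOn (fun x => f x * x ^ (κ - 1)) (Ioi 0))
    (hxf : IntegrableOn (fun x => xdop f x * x ^ (κ - 1)) (Ioi 0)) :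
    Mell (xdop f) κ = -κ * Mell f κ := by
  -- In the variable `t = log x`, the boundary term `x ^ κ * f x` and its derivative `h'` are both
  -- integrable on `ℝ`, so `h'` integrates to zero.
  set h' : ℝ → ℝ := fun x => κ * (f x * x ^ (κ - 1)) + xdop f x * x ^ (κ - 1)
  have hh' : IntegrableOn h' (Ioi 0) := (hf.const_mul κ).add hxf
  have hexp : ∀ t, Real.exp t * Real.exp t ^ (κ - 1) = Real.exp (κ * t) := fun t => by
    rw [← Real.exp_mul, ← Real.exp_add]
    ring_nf
  have hderiv : ∀ t, HasDerivAt (fun t => Real.exp (κ * t) * f (Real.exp t))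
      (Real.exp t * h' (Real.exp t)) t := by
    intro t
    refine ((((hasDerivAt_id t).const_mul κ).exp).fun_mul ((hd _ (Real.exp_pos t)).hasDerivAt.comp
      t (Real.hasDerivAt_exp t))).congr_deriv ?_
    simp only [h', xdop, Function.comp_apply, id, mul_one]
    linear_combination -(κ * f (Real.exp t) + Real.exp t * deriv f (Real.exp t)) * hexp t
  have hg : Integrable fun t => Real.exp (κ * t) * f (Real.exp t) :=
    (integrableOn_Ioi_zero_iff_integrable_exp_mul_comp_exp.1 hf).congr <| ae_of_all _ fun t => by
      linear_combination f (Real.exp t) * hexp t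
  have h0 := integral_eq_zero_of_hasDerivAt_of_integrable hderiv
    (integrableOn_Ioi_zero_iff_integrable_exp_mul_comp_exp.1 hh') hg
  rw [← integral_Ioi_zero_eq_integral_exp_mul_comp_exp, integral_add (hf.const_mul κ) hxf,
    integral_const_mul] at h0
  rw [Mell, Mell]
  linarith

theorem mell_iterate_xdop {f : ℝ → ℝ} {κ : ℝ} {j : ℕ}
    (hd : ∀ i < j, ∀ x, 0 < x → DifferentiableAt ℝ (xdop^[i] f) x)
    (hi : ∀ i ≤ j, IntegrableOn (fun x => xdop^[i] f x * x ^ (κ - 1)) (Ioi 0)) :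
    Mell (xdop^[j] f) κ = (-κ) ^ j * Mell f κ := by
  induction j with
  | zero => simp
  | succ j ih =>
    have hi' := hi (j + 1) le_rfl
    rw [Function.iterate_succ_apply'] at hi' ⊢
    rw [mell_xdop (hd j j.lt_succ_self) (hi j j.le_succ) hi',
      ih (fun i hij => hd i (by omega)) (fun i hij => hi i (by omega))]
    ring

theorem MeasureTheory.AEStronglyMeasurable.iterate_xdop {f : ℝ → ℝ} {μ : Measure ℝ}
    (hf : AEStronglyMeasurable f μ) : ∀ j, AEStronglyMeasurable (xdop^[j] f) μ
  | 0 => hf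
  | j + 1 => by
    rw [Function.iterate_succ_apply']
    exact (measurable_id.mul (measurable_deriv _)).aestronglyMeasurable

structure IsL1G (n : ℕ) (ω : ℝ → ℝ) : Prop where
  nonneg : ∀ x : ℝ, 0 < x → 0 ≤ ω x
  differentiableAt : ∀ j : ℕ, j < n - 1 → ∀ x : ℝ, 0 < x → DifferentiableAt ℝ (xdop^[j] ω) x
  integrableOn : ∀ κ : ℝ, 1 ≤ κ → κ ≤ n → ∀ j : ℕ, j ≤ n - 1 →
    IntegrableOn (fun x : ℝ => x ^ (κ - 1) * |(xdop^[j] ω) x|) (Ioi 0)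

namespace IsL1G

variable {n : ℕ} {ω : ℝ → ℝ}

theorem integrableOn_iterate_xdop_mul_rpow (hω : IsL1G n ω) {κ : ℝ} (hκ : κ ∈ Icc (1 : ℝ) n)
    {j : ℕ} (hj : j ≤ n - 1) : IntegrableOn (fun x => xdop^[j] ω x * x ^ (κ - 1)) (Ioi 0) := by
  have hmeas : AEStronglyMeasurable ω (volume.restrict (Ioi 0)) :=
    (hω.integrableOn 1 le_rfl (hκ.1.trans hκ.2) 0 (Nat.zero_le _)).aestronglyMeasurable.congr <|
      ae_restrict_of_forall_mem measurableSet_Ioi fun x hx => by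
        simp [abs_of_nonneg (hω.nonneg x hx)]
  refine (hω.integrableOn κ hκ.1 hκ.2 j hj).mono' ((hmeas.iterate_xdop j).mul (by fun_prop)) <|
    ae_restrict_of_forall_mem measurableSet_Ioi fun x hx => ?_
  rw [norm_mul, Real.norm_eq_abs, Real.norm_eq_abs, abs_of_pos (Real.rpow_pos_of_pos hx _),
    mul_comm]

theorem setIntegral_det_rpow_mul_det_iterate_xdop (hω : IsL1G n ω) {κ : Fin n → ℝ}
    (hκ : ∀ b, κ b ∈ Icc (1 : ℝ) n) :
    ∫ a in univ.pi fun _ => Ioi (0 : ℝ),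
        (of fun b c : Fin n => a c ^ (κ b - 1)).det *
          (of fun b c : Fin n => (-1 : ℝ) ^ (b : ℕ) * (xdop^[b] ω) (a c)).det
      = n ! * (∏ b, Mell ω (κ b)) * vdm κ := by
  have hintegrable : ∀ b c : Fin n,
      IntegrableOn (fun x => xdop^[c] ω x * x ^ (κ b - 1)) (Ioi 0) :=
    fun b c => hω.integrableOn_iterate_xdop_mul_rpow (hκ b) (by omega)
  have hentry : ∀ b c : Fin n, ∫ x in Ioi 0, x ^ (κ b - 1) * ((-1) ^ (c : ℕ) * xdop^[c] ω x)
      = Mell ω (κ b) * vandermonde κ b c := by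
    intro b c
    have hM : Mell (xdop^[c] ω) (κ b) = (-κ b) ^ (c : ℕ) * Mell ω (κ b) :=
      mell_iterate_xdop (fun i _ => hω.differentiableAt i (by omega))
        (fun i _ => hω.integrableOn_iterate_xdop_mul_rpow (hκ b) (by omega))
    calc ∫ x in Ioi 0, x ^ (κ b - 1) * ((-1) ^ (c : ℕ) * xdop^[c] ω x)
        = (-1) ^ (c : ℕ) * Mell (xdop^[c] ω) (κ b) := by
          rw [Mell, ← integral_const_mul]
          exact setIntegral_congr_fun measurableSet_Ioi fun x _ => by ring
      _ = Mell ω (κ b) * vandermonde κ b c := by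
          rw [hM, vandermonde_apply, ← mul_assoc, ← mul_pow]
          ring
  rw [volume_pi, Measure.restrict_pi_pi, integral_det_mul_det_eq_factorial_mul_det
    (fun b x => x ^ (κ b - 1)) (fun c x => (-1) ^ (c : ℕ) * xdop^[c] ω x) fun b c =>
      ((hintegrable b c).const_mul ((-1) ^ (c : ℕ))).congr <| ae_of_all _ fun x => by ring]
  simp_rw [hentry, Fintype.card_fin]
  rw [det_mul_column, ← vdm_eq_det_vandermonde, mul_assoc]

theorem const_mul_prod_mell_eq_one (hω : IsL1G n ω) {C : ℝ} {p : (Fin n → ℝ) → ℝ}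
    (hp : ∀ a : Fin n → ℝ, (∀ i, 0 < a i) →
      p a = C * vdm a * (of fun b c : Fin n => (-1 : ℝ) ^ (b : ℕ) * (xdop^[b] ω) (a c)).det)
    (hp1 : ∫ a in univ.pi fun _ => Ioi (0 : ℝ), p a = 1) :
    C * (n ! * (∏ b : Fin n, Mell ω ((b : ℝ) + 1)) * ∏ j ∈ range n, (j ! : ℝ)) = 1 := by
  have hκ : ∀ b : Fin n, ((b : ℕ) : ℝ) + 1 ∈ Icc (1 : ℝ) n := fun b =>
    ⟨by simp, by exact_mod_cast b.isLt⟩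
  refine Eq.trans ?_ hp1
  rw [← vdm_natCast_add_one, ← hω.setIntegral_det_rpow_mul_det_iterate_xdop hκ,
    ← integral_const_mul]
  refine setIntegral_congr_fun (MeasurableSet.univ_pi fun _ => measurableSet_Ioi) fun a ha => ?_
  have hV : (of fun b c : Fin n => a c ^ (b : ℕ)).det = vdm a := by
    rw [vdm_eq_det_vandermonde, ← det_transpose]
    rfl
  simp_rw [add_sub_cancel_right, Real.rpow_natCast, hV]
  rw [hp a fun i => ha i (mem_univ i)]
  ring

theorem setIntegral_mul_det_rpow_div_vdm (hω : IsL1G n ω) {C : ℝ} {p : (Fin n → ℝ) → ℝ}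
    (hp : ∀ a : Fin n → ℝ, (∀ i, 0 < a i) →
      p a = C * vdm a * (of fun b c : Fin n => (-1 : ℝ) ^ (b : ℕ) * (xdop^[b] ω) (a c)).det)
    {s : Fin n → ℝ} (hs : Function.Injective s)
    (hrange : ∀ c, s c - ((n : ℝ) - 1) / 2 ∈ Icc (1 : ℝ) n) :
    ∫ a in univ.pi fun _ => Ioi (0 : ℝ),
        p a * (of fun b c : Fin n => a b ^ (s c - ((n : ℝ) + 1) / 2)).det / (vdm s * vdm a)
      = C * (n ! * ∏ b, Mell ω (s b - ((n : ℝ) - 1) / 2)) := by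
  set κ : Fin n → ℝ := fun c => s c - ((n : ℝ) - 1) / 2
  have hT : ∀ a : Fin n → ℝ, (of fun b c : Fin n => a b ^ (s c - ((n : ℝ) + 1) / 2)).det
      = (of fun b c : Fin n => a c ^ (κ b - 1)).det := fun a => by
    rw [← det_transpose]
    congr with b c
    simp only [of_apply, κ]
    ring_nf
  have hcancel : ∀ x : ℝ, C / vdm s * (x * vdm s) = C * x := fun x => by
    field_simp [vdm_ne_zero_iff.2 hs]
  calc _ = ∫ a in univ.pi fun _ => Ioi (0 : ℝ), C / vdm s *
          ((of fun b c : Fin n => a c ^ (κ b - 1)).det *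
            (of fun b c : Fin n => (-1 : ℝ) ^ (b : ℕ) * (xdop^[b] ω) (a c)).det) := by
        refine setIntegral_congr_fun (MeasurableSet.univ_pi fun _ => measurableSet_Ioi)
          fun a ha => ?_
        rw [hp a fun i => ha i (mem_univ i), hT]
        -- where `vdm a = 0` the left side is a junk `x / 0 = 0`; the right side vanishes because
        -- its first determinant then has two equal columns
        rcases eq_or_ne (vdm a) 0 with h | h
        · rw [det_eq_zero_of_vdm_eq_zero h fun b x => x ^ (κ b - 1), h]
          simp
        · field_simp
    _ = _ := by
      rw [integral_const_mul, hω.setIntegral_det_rpow_mul_det_iterate_xdop hrange,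
        vdm_sub_const, hcancel]

end IsL1G

theorem mellinTransform_polyaEnsemble_GL_general
    (n : ℕ) (ω : ℝ → ℝ)
    (hpos : ∀ x : ℝ, 0 < x → 0 ≤ ω x)
    (hdiff : ∀ j : ℕ, j < n - 1 → ∀ x : ℝ, 0 < x → DifferentiableAt ℝ (xdop^[j] ω) x)
    (hint : ∀ κ : ℝ, 1 ≤ κ → κ ≤ n → ∀ j : ℕ, j ≤ n - 1 →
      IntegrableOn (fun x : ℝ => x ^ (κ - 1) * |(xdop^[j] ω) x|) (Set.Ioi 0))
    (C : ℝ) (p : (Fin n → ℝ) → ℝ)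
    (hp : ∀ a : Fin n → ℝ, (∀ i, 0 < a i) →
      p a = C * vdm a * Matrix.det (Matrix.of fun b c : Fin n =>
        (-1 : ℝ) ^ (b : ℕ) * (xdop^[(b : ℕ)] ω) (a c)))
    (hp1 : ∫ a in Set.univ.pi (fun _ : Fin n => Set.Ioi (0:ℝ)), p a = 1) :
    C = (∏ j ∈ Finset.Icc 1 n, 1 / ((j.factorial : ℝ) * Mell ω (j : ℝ))) ∧
    ∀ s : Fin n → ℝ, Function.Injective s →
      (∀ c : Fin n, 1 ≤ s c - ((n : ℝ) - 1) / 2 ∧ s c - ((n : ℝ) - 1) / 2 ≤ n) →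
      (∏ j ∈ Finset.range n, (j.factorial : ℝ)) *
        ∫ a in Set.univ.pi (fun _ : Fin n => Set.Ioi (0:ℝ)),
          p a *
            Matrix.det (Matrix.of fun b c : Fin n => (a b) ^ (s c - ((n : ℝ) + 1) / 2)) /
            (vdm s * vdm a)
      = ∏ j : Fin n, Mell ω (s j - ((n : ℝ) - 1) / 2) / Mell ω ((j : ℝ) + 1) := by
  have hω : IsL1G n ω := ⟨hpos, hdiff, hint⟩
  have hnorm := hω.const_mul_prod_mell_eq_one hp hp1
  have hM : ∏ b : Fin n, Mell ω ((b : ℝ) + 1) ≠ 0 := fun h => by simp [h] at hnorm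
  refine ⟨?_, fun s hs hrange => ?_⟩
  · simp_rw [one_div]
    rw [prod_inv_distrib, prod_Icc_one_factorial_mul,
      ← Fin.prod_univ_eq_prod_range (fun j => Mell ω ((j + 1 : ℕ) : ℝ))]
    push_cast
    exact eq_inv_of_mul_eq_one_left hnorm
  · rw [hω.setIntegral_mul_det_rpow_div_vdm hp hs hrange, prod_div_distrib, eq_div_iff hM]
    linear_combination (∏ b, Mell ω (s b - ((n : ℝ) - 1) / 2)) * hnorm

/-- for a Pólya ensemble on `GL(n,ℂ)`, the normalization constant is
`C_n[ω] = ∏_{j=1}^n 1/(j!·Mω(j))` and the multivariate Mellin (spherical) transform factorizes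
into the univariate Mellin transforms `∏_j Mω(s_j − (n−1)/2)/Mω(j)`. -/
theorem mellinTransform_polyaEnsemble_GL
    (n : ℕ) (hn : 1 ≤ n) (ω : ℝ → ℝ)
    (hpos : ∀ x : ℝ, 0 < x → 0 ≤ ω x)
    (hdiff : ∀ j : ℕ, j < n - 1 → ∀ x : ℝ, 0 < x → DifferentiableAt ℝ (xdop^[j] ω) x)
    (hint : ∀ κ : ℝ, 1 ≤ κ → κ ≤ n → ∀ j : ℕ, j ≤ n - 1 →
      IntegrableOn (fun x : ℝ => x ^ (κ - 1) * |(xdop^[j] ω) x|) (Set.Ioi 0))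
    (hM : ∀ j : ℕ, 1 ≤ j → j ≤ n → 0 < Mell ω (j : ℝ))
    (C : ℝ) (p : (Fin n → ℝ) → ℝ)
    (hp : ∀ a : Fin n → ℝ, (∀ i, 0 < a i) →
      p a = C * vdm a * Matrix.det (Matrix.of fun b c : Fin n =>
        (-1 : ℝ) ^ (b : ℕ) * (xdop^[(b : ℕ)] ω) (a c)))
    (hp0 : ∀ a : Fin n → ℝ, (∀ i, 0 < a i) → 0 ≤ p a)
    (hpint : IntegrableOn p (Set.univ.pi (fun _ : Fin n => Set.Ioi (0:ℝ))))
    (hp1 : ∫ a in Set.univ.pi (fun _ : Fin n => Set.Ioi (0:ℝ)), p a = 1) :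
    C = (∏ j ∈ Finset.Icc 1 n, 1 / ((j.factorial : ℝ) * Mell ω (j : ℝ))) ∧
    ∀ s : Fin n → ℝ, Function.Injective s →
      (∀ c : Fin n, 1 ≤ s c - ((n : ℝ) - 1) / 2 ∧ s c - ((n : ℝ) - 1) / 2 ≤ n) →
      (∏ j ∈ Finset.range n, (j.factorial : ℝ)) *
        ∫ a in Set.univ.pi (fun _ : Fin n => Set.Ioi (0:ℝ)),
          p a *
            Matrix.det (Matrix.of fun b c : Fin n => (a b) ^ (s c - ((n : ℝ) + 1) / 2)) /
            (vdm s * vdm a)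
      = ∏ j : Fin n, Mell ω (s j - ((n : ℝ) - 1) / 2) / Mell ω ((j : ℝ) + 1) :=
  mellinTransform_polyaEnsemble_GL_general n ω hpos hdiff hint C p hp hp1
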